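/- Let U be an open subset of a finite-dimensional real vector space E, g̃ a smooth assignment of a symmetric bilinear form g̃_p on E to each p ∈ U, Ω : U → ℝ a smooth function, and define the conformally rescaled metric g_p := Ω(p)²·g̃_p. Then the Koszul forms K of g and K̃ of g̃ are related, for all smooth vector fields X, Y, Z : U → E, by K(X,Y,Z) = Ω²·K̃(X,Y,Z) + Ω·( g̃(Y,Z)·X(Ω) + g̃(X,Z)·Y(Ω) − g̃(X,Y)·Z(Ω) ). -/

import Mathlib

variable {E : Type*} [NormedAddCommGroup E] [NormedSpace ℝ E] [FiniteDimensional ℝ E]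

/-- The action `(Xf)(p) = df_p(X(p))` of a vector field on a function. -/
noncomputable def vAct (X : E → E) (f : E → ℝ) : E → ℝ := fun p => fderiv ℝ f p (X p)

/-- The Lie bracket `[X,Y](p) = dY_p(X(p)) − dX_p(Y(p))` of vector fields. -/
noncomputable def vBracket (X Y : E → E) : E → E :=
  fun p => fderiv ℝ Y p (X p) - fderiv ℝ X p (Y p)

/-- The function `p ↦ g_p(Y(p), Z(p))`. -/
noncomputable def gFun (g : E → E →L[ℝ] E →L[ℝ] ℝ) (Y Z : E → E) : E → ℝ := fun p => g p (Y p) (Z p)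

/-- The Koszul form
`K(X,Y,Z) := ½{X g(Y,Z) + Y g(Z,X) − Z g(X,Y) − g(X,[Y,Z]) + g(Y,[Z,X]) + g(Z,[X,Y])}`. -/
noncomputable def koszul (g : E → E →L[ℝ] E →L[ℝ] ℝ) (X Y Z : E → E) : E → ℝ := fun p =>
  (1/2 : ℝ) * (vAct X (gFun g Y Z) p + vAct Y (gFun g Z X) p - vAct Z (gFun g X Y) p
    - gFun g X (vBracket Y Z) p + gFun g Y (vBracket Z X) p + gFun g Z (vBracket X Y) p)

/-!
The conformal factor enters each Koszul form only through the three derivative terms, where the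
product rule gives `W(Ω² h) = Ω² W(h) + 2 Ω W(Ω) h`; the bracket terms are merely scaled by `Ω²`.
Summing the three extra contributions and using the symmetry of `g̃` yields the formula.
-/

theorem ContDiffOn.differentiableAt_of_isOpen {𝕜 F G : Type*} [NontriviallyNormedField 𝕜]
    [NormedAddCommGroup F] [NormedSpace 𝕜 F] [NormedAddCommGroup G] [NormedSpace 𝕜 G]
    {n : WithTop ℕ∞} {f : F → G} {U : Set F} {x : F} (hf : ContDiffOn 𝕜 n f U) (hn : n ≠ 0)
    (hU : IsOpen U) (hx : x ∈ U) : DifferentiableAt 𝕜 f x :=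
  (hf.differentiableOn hn).differentiableAt (hU.mem_nhds hx)

section
variable {F : Type*} [NormedAddCommGroup F] [NormedSpace ℝ F]
variable {W A B : F → F} {f h Ω : F → ℝ} {g : F → F →L[ℝ] F →L[ℝ] ℝ} {p : F}

lemma vAct_mul (hf : DifferentiableAt ℝ f p) (hh : DifferentiableAt ℝ h p) :
    vAct W (fun q => f q * h q) p = f p * vAct W h p + h p * vAct W f p := by
  simp [vAct, fderiv_fun_mul hf hh]

lemma vAct_sq (hf : DifferentiableAt ℝ f p) :
    vAct W (fun q => f q ^ 2) p = 2 * f p * vAct W f p := by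
  simp only [pow_two, vAct_mul hf hf]
  ring

lemma gFun_conformal (Ω : F → ℝ) (g : F → F →L[ℝ] F →L[ℝ] ℝ) (A B : F → F) :
    gFun (fun q => Ω q ^ 2 • g q) A B = fun q => Ω q ^ 2 * gFun g A B q :=
  rfl

lemma DifferentiableAt.gFun (hg : DifferentiableAt ℝ g p) (hA : DifferentiableAt ℝ A p)
    (hB : DifferentiableAt ℝ B p) : DifferentiableAt ℝ (gFun g A B) p :=
  (hg.clm_apply hA).clm_apply hB

lemma vAct_gFun_conformal (hΩ : DifferentiableAt ℝ Ω p) (hg : DifferentiableAt ℝ g p)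
    (hA : DifferentiableAt ℝ A p) (hB : DifferentiableAt ℝ B p) :
    vAct W (gFun (fun q => Ω q ^ 2 • g q) A B) p
      = Ω p ^ 2 * vAct W (gFun g A B) p + 2 * Ω p * vAct W Ω p * gFun g A B p := by
  rw [gFun_conformal, vAct_mul (hΩ.fun_pow 2) (hg.gFun hA hB), vAct_sq hΩ]
  ring

lemma koszul_conformal_apply {X Y Z : F → F} (hsymm : ∀ u v : F, g p u v = g p v u)
    (hΩ : DifferentiableAt ℝ Ω p) (hg : DifferentiableAt ℝ g p) (hX : DifferentiableAt ℝ X p)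
    (hY : DifferentiableAt ℝ Y p) (hZ : DifferentiableAt ℝ Z p) :
    koszul (fun q => Ω q ^ 2 • g q) X Y Z p =
      Ω p ^ 2 * koszul g X Y Z p +
        Ω p * (g p (Y p) (Z p) * vAct X Ω p + g p (X p) (Z p) * vAct Y Ω p
          - g p (X p) (Y p) * vAct Z Ω p) := by
  simp only [koszul]
  rw [vAct_gFun_conformal hΩ hg hY hZ, vAct_gFun_conformal hΩ hg hZ hX,
    vAct_gFun_conformal hΩ hg hX hY]
  simp only [gFun, smul_apply, smul_eq_mul, hsymm (Z p) (X p)]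
  ring

end

/-- for the conformally rescaled (possibly degenerate) metric
`g := Ω² g̃`, the Koszul forms are related by
`K(X,Y,Z) = Ω²·K̃(X,Y,Z) + Ω·(g̃(Y,Z)·X(Ω) + g̃(X,Z)·Y(Ω) − g̃(X,Y)·Z(Ω))` on `U`. -/
theorem koszul_conformal
    (U : Set E) (hU : IsOpen U)
    (gt : E → E →L[ℝ] E →L[ℝ] ℝ) (hgt : ContDiffOn ℝ (⊤ : ℕ∞) gt U)
    (hsymm : ∀ p : E, ∀ u v : E, gt p u v = gt p v u)
    (Ω : E → ℝ) (hΩ : ContDiffOn ℝ (⊤ : ℕ∞) Ω U)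
    (X Y Z : E → E) (hX : ContDiffOn ℝ (⊤ : ℕ∞) X U) (hY : ContDiffOn ℝ (⊤ : ℕ∞) Y U)
    (hZ : ContDiffOn ℝ (⊤ : ℕ∞) Z U) :
    ∀ p ∈ U,
      koszul (fun q => Ω q ^ 2 • gt q) X Y Z p =
        Ω p ^ 2 * koszul gt X Y Z p +
          Ω p * (gt p (Y p) (Z p) * vAct X Ω p + gt p (X p) (Z p) * vAct Y Ω p
            - gt p (X p) (Y p) * vAct Z Ω p) := by
  intro p hp
  exact koszul_conformal_apply (hsymm p) (hΩ.differentiableAt_of_isOpen (by simp) hU hp)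
    (hgt.differentiableAt_of_isOpen (by simp) hU hp) (hX.differentiableAt_of_isOpen (by simp) hU hp)
    (hY.differentiableAt_of_isOpen (by simp) hU hp) (hZ.differentiableAt_of_isOpen (by simp) hU hp)
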